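/- Let S be a finite set of Young diagrams and F a Young diagram. Suppose there exists n such that every Young diagram G with |G| > n and G > F lies in the upward closure of S (i.e., G ≥ D for some D ∈ S). Then F ≥ (D)_r ∪ (E)_c for some D, E ∈ S. -/

import Mathlib

/-- `Dr` is obtained from `D` by shortening the first row to `max (r₂ D) 1`. -/
def IsShortRow (D Dr : YoungDiagram) : Prop :=
  Dr.rowLen 0 = max (D.rowLen 1) 1 ∧ ∀ i : ℕ, 0 < i → Dr.rowLen i = D.rowLen i

/-- `Ec` is obtained from `E` by shortening the first column to `max (c₂ E) 1`. -/
def IsShortCol (E Ec : YoungDiagram) : Prop :=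
  Ec.colLen 0 = max (E.colLen 1) 1 ∧ ∀ i : ℕ, 0 < i → Ec.colLen i = E.colLen i

/-!
Lengthening the first row of `F` to some `N > max n (r₁ F)` gives a diagram `G > F` with
`|G| > n`, so some `D ∈ S` lies below `G`. Below its first row `G` agrees with `F`, hence so
does `D` up to containment, and `r₂ D ≤ r₂ F ≤ r₁ F`; therefore `(D)_r ≤ F`. The column
statement is the row statement for the transposed diagrams.
-/

namespace YoungDiagram

theorem rowLen_eq_of_forall_mem_iff {μ : YoungDiagram} {i t : ℕ}
    (h : ∀ j, (i, j) ∈ μ ↔ j < t) : μ.rowLen i = t :=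
  eq_of_forall_lt_iff fun j => mem_iff_lt_rowLen.symm.trans (h j)

theorem le_iff_rowLen_le {μ ν : YoungDiagram} :
    μ ≤ ν ↔ ∀ i, μ.rowLen i ≤ ν.rowLen i := by
  refine ⟨fun h i => ?_, fun h ⟨i, j⟩ hc => ?_⟩
  · by_contra! hlt
    exact (mem_iff_lt_rowLen.mp (h (mem_iff_lt_rowLen.mpr hlt))).false
  · exact mem_iff_lt_rowLen.mpr ((mem_iff_lt_rowLen.mp hc).trans_le (h i))

theorem rowLen_le_card (μ : YoungDiagram) (i : ℕ) : μ.rowLen i ≤ μ.card := by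
  rw [rowLen_eq_card]
  exact Finset.card_filter_le _ _

theorem rowLen_zero_pos {μ : YoungDiagram} (hμ : μ ≠ ⊥) : 0 < μ.rowLen 0 := by
  refine Nat.pos_of_ne_zero fun h0 => hμ (SetLike.ext fun ⟨i, j⟩ => ?_)
  refine ⟨fun hc => ?_, fun hc => absurd hc (notMem_bot _)⟩
  have := mem_iff_lt_rowLen.mp (μ.up_left_mem (Nat.zero_le i) (Nat.zero_le j) hc)
  omega

theorem transpose_ne_bot {μ : YoungDiagram} (hμ : μ ≠ ⊥) : μ.transpose ≠ ⊥ :=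
  transposeOrderIso.map_bot ▸ transposeOrderIso.injective.ne hμ

theorem card_transpose (μ : YoungDiagram) : μ.transpose.card = μ.card := by
  simp only [YoungDiagram.card, transpose, Equiv.finsetCongr_apply, Finset.card_map]

def withFirstRow (μ : YoungDiagram) (m : ℕ) (hm : μ.rowLen 1 ≤ m) : YoungDiagram where
  cells := μ.cells.filter (fun c => c.1 ≠ 0) ∪ (Finset.range m).image (fun j => (0, j))
  isLowerSet := by
    rintro ⟨i₂, j₂⟩ ⟨i₁, j₁⟩ ⟨hi, hj⟩ hc
    simp only [Finset.coe_union, Finset.coe_filter, Finset.coe_image, Finset.coe_range,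
      Set.mem_union, Set.mem_ofPred_eq, Set.mem_image, Set.mem_Iio, Prod.mk.injEq,
      mem_cells] at hc ⊢ hi hj
    rcases hc with ⟨hc, hi₂⟩ | ⟨j, hjm, rfl, rfl⟩
    · by_cases hi₁ : i₁ = 0
      · have := mem_iff_lt_rowLen.mp hc
        have := μ.rowLen_anti 1 i₂ (by omega)
        exact Or.inr ⟨j₁, by omega, hi₁.symm, rfl⟩
      · exact Or.inl ⟨μ.up_left_mem hi hj hc, hi₁⟩
    · exact Or.inr ⟨j₁, by omega, by omega, rfl⟩

section withFirstRow

variable {μ : YoungDiagram} {m : ℕ} {hm : μ.rowLen 1 ≤ m}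

theorem mem_withFirstRow {i j : ℕ} :
    (i, j) ∈ μ.withFirstRow m hm ↔ j < if i = 0 then m else μ.rowLen i := by
  rw [← mem_cells]
  rcases eq_or_ne i 0 with rfl | hi
  · simp [withFirstRow]
  · simp [withFirstRow, mem_iff_lt_rowLen, hi, Ne.symm hi]

theorem rowLen_withFirstRow (i : ℕ) :
    (μ.withFirstRow m hm).rowLen i = if i = 0 then m else μ.rowLen i :=
  rowLen_eq_of_forall_mem_iff fun _ => mem_withFirstRow

theorem lt_withFirstRow (h : μ.rowLen 0 < m) : μ < μ.withFirstRow m hm := by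
  refine lt_of_le_of_ne (le_iff_rowLen_le.mpr fun i => ?_) fun he => ?_
  · rw [rowLen_withFirstRow]
    split_ifs with hi
    · exact hi ▸ h.le
    · exact le_rfl
  · have := rowLen_withFirstRow (hm := hm) 0
    rw [← he, if_pos rfl] at this
    omega

theorem withFirstRow_le_of_le_withFirstRow {ν : YoungDiagram} {N : ℕ} {hN : ν.rowLen 1 ≤ N}
    (h : μ ≤ ν.withFirstRow N hN) (hmν : m ≤ ν.rowLen 0) : μ.withFirstRow m hm ≤ ν := by
  refine le_iff_rowLen_le.mpr fun i => ?_
  have := le_iff_rowLen_le.mp h i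
  rcases eq_or_ne i 0 with rfl | hi
  · simpa only [rowLen_withFirstRow, ↓reduceIte] using hmν
  · simpa only [rowLen_withFirstRow, if_neg hi] using this

theorem le_card_withFirstRow : m ≤ (μ.withFirstRow m hm).card := by
  simpa only [rowLen_withFirstRow, ↓reduceIte] using rowLen_le_card (μ.withFirstRow m hm) 0

end withFirstRow

theorem isShortRow_withFirstRow (μ : YoungDiagram) :
    IsShortRow μ (μ.withFirstRow (max (μ.rowLen 1) 1) (le_max_left _ _)) := by
  refine ⟨by rw [rowLen_withFirstRow, if_pos rfl], fun i hi => ?_⟩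
  rw [rowLen_withFirstRow, if_neg hi.ne']

theorem IsShortRow.transpose {μ ν : YoungDiagram} (h : IsShortRow μ.transpose ν) :
    IsShortCol μ ν.transpose := by
  simp only [IsShortRow, rowLen_transpose] at h
  simpa only [IsShortCol, colLen_transpose] using h

def EventuallyInUpperClosure (S : Finset YoungDiagram) (F : YoungDiagram) : Prop :=
  ∃ n : ℕ, ∀ G : YoungDiagram, n < G.card → F < G → ∃ D ∈ S, D ≤ G

open Classical in
theorem EventuallyInUpperClosure.transpose {S : Finset YoungDiagram} {F : YoungDiagram}
    (h : EventuallyInUpperClosure S F) :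
    EventuallyInUpperClosure (S.image YoungDiagram.transpose) F.transpose := by
  obtain ⟨n, hn⟩ := h
  refine ⟨n, fun G hGn hFG => ?_⟩
  obtain ⟨D, hDS, hDG⟩ := hn G.transpose (by rwa [card_transpose])
    (by simpa using transposeOrderIso.lt_iff_lt.mpr hFG)
  exact ⟨D.transpose, Finset.mem_image_of_mem _ hDS,
    by simpa using YoungDiagram.transpose_mono hDG⟩

theorem exists_isShortRow_le {S : Finset YoungDiagram} {F : YoungDiagram} (hF : F ≠ ⊥)
    (h : EventuallyInUpperClosure S F) : ∃ D ∈ S, ∃ Dr, IsShortRow D Dr ∧ Dr ≤ F := by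
  obtain ⟨n, hn⟩ := h
  have hF₁ : F.rowLen 1 ≤ F.rowLen 0 := F.rowLen_anti 0 1 zero_le_one
  set N := max (n + 1) (F.rowLen 0 + 1)
  obtain ⟨D, hDS, hDG⟩ := hn (F.withFirstRow N (by omega))
    ((show n < N by omega).trans_le le_card_withFirstRow)
    (lt_withFirstRow (by omega))
  refine ⟨D, hDS, _, isShortRow_withFirstRow D, withFirstRow_le_of_le_withFirstRow hDG ?_⟩
  have hD₁ := le_iff_rowLen_le.mp hDG 1
  rw [rowLen_withFirstRow, if_neg one_ne_zero] at hD₁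
  have := rowLen_zero_pos hF
  omega

end YoungDiagram

open YoungDiagram

theorem youngDiagram_shortSup_le_of_eventually_ucl_general (S : Finset YoungDiagram)
    (F : YoungDiagram) (hF : F ≠ ⊥)
    (h : ∃ n : ℕ, ∀ G : YoungDiagram, n < G.card → F < G → ∃ D ∈ S, D ≤ G) :
    ∃ D ∈ S, ∃ E ∈ S, ∃ Dr Ec : YoungDiagram,
      IsShortRow D Dr ∧ IsShortCol E Ec ∧ Dr ⊔ Ec ≤ F := by
  classical
  have hucl : EventuallyInUpperClosure S F := h
  obtain ⟨D, hDS, Dr, hDr, hDrF⟩ := exists_isShortRow_le hF hucl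
  obtain ⟨E', hE'S, Er, hEr, hErF⟩ := exists_isShortRow_le (transpose_ne_bot hF) hucl.transpose
  obtain ⟨E, hES, rfl⟩ := Finset.mem_image.mp hE'S
  refine ⟨D, hDS, E, hES, Dr, Er.transpose, hDr, hEr.transpose, sup_le hDrF ?_⟩
  simpa using YoungDiagram.transpose_mono hErF

/-- If for some `n` every diagram `G` with `|G| > n` and `G > F` lies in the upward
closure of the finite set `S`, then `F ≥ (D)_r ⊔ (E)_c` for some `D, E ∈ S`. -/
theorem youngDiagram_shortSup_le_of_eventually_ucl (S : Finset YoungDiagram)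
    (hS : ∀ D ∈ S, D ≠ ⊥) (F : YoungDiagram) (hF : F ≠ ⊥)
    (h : ∃ n : ℕ, ∀ G : YoungDiagram, n < G.card → F < G → ∃ D ∈ S, D ≤ G) :
    ∃ D ∈ S, ∃ E ∈ S, ∃ Dr Ec : YoungDiagram,
      IsShortRow D Dr ∧ IsShortCol E Ec ∧ Dr ⊔ Ec ≤ F :=
  youngDiagram_shortSup_le_of_eventually_ucl_general S F hF h
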